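/- Theorem 1: Assume (A1)–(A3), (A5), (A6), the MSM, and either (A4.1) or (A4.2). Then the following are equivalent: (i) θ_sw^(m) = θ^(K); (ii) θ_rsw^(m) = θ^(K); (iii) θ_sw^(m) = θ_rsw^(m). -/

import Mathlib

open MeasureTheory Finset
open scoped Classical

namespace MSMPaper

noncomputable section

variable {Ω : Type*} [MeasurableSpace Ω] {𝓛 : Type*}

/-- Conditional probability `P(E | F) = P(E ∩ F) / P(F)` as a real number
(junk value `0` when `P F = 0`). -/
def cP (P : Measure Ω) (E F : Set Ω) : ℝ := (P (E ∩ F)).toReal / (P F).toReal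

variable {K : ℕ}

/-- Event `Ā(t−1) = b̄` (treatment history up to, not including, time `t`). -/
def Apast (A : Fin K → Ω → Bool) (t : ℕ) (b : Fin K → Bool) : Set Ω :=
  {ω | ∀ k : Fin K, (k : ℕ) < t → A k ω = b k}

/-- Event `L̄(t) = l̄` (covariate history up to and including time `t`). -/
def Lpast (L : Fin K → Ω → 𝓛) (t : ℕ) (l : Fin K → 𝓛) : Set Ω :=
  {ω | ∀ k : Fin K, (k : ℕ) ≤ t → L k ω = l k}

/-- Event `A̲(s, t−1) = b` (treatment history from time `s` up to, not including, `t`). -/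
def Aseg (A : Fin K → Ω → Bool) (s t : ℕ) (b : Fin K → Bool) : Set Ω :=
  {ω | ∀ k : Fin K, s ≤ (k : ℕ) → (k : ℕ) < t → A k ω = b k}

/-- Event `A̲(K−m) = a̲` for a (last-`m`) treatment vector `as`. -/
def EtrV (A : Fin K → Ω → Bool) (m : ℕ) (as : Fin K → Bool) : Set Ω :=
  {ω | ∀ k : Fin K, K - m ≤ (k : ℕ) → A k ω = as k}

/-- Event `A̲(K−m) = a_m` (constant `a` on the last `m` coordinates). -/
def Etr (A : Fin K → Ω → Bool) (m : ℕ) (a : Bool) : Set Ω :=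
  EtrV A m (fun _ => a)

/-- Stabilized weights `W_sw`. -/
def Wsw (P : Measure Ω) (A : Fin K → Ω → Bool) (L : Fin K → Ω → 𝓛) : Ω → ℝ :=
  fun ω => ∏ k : Fin K,
    cP P {ω' | A k ω' = A k ω} (Apast A (k : ℕ) (fun j => A j ω)) /
      cP P {ω' | A k ω' = A k ω}
        (Lpast L (k : ℕ) (fun j => L j ω) ∩ Apast A (k : ℕ) (fun j => A j ω))

/-- Restricted stabilized weights `W_rsw^(m)`. -/
def Wrsw (P : Measure Ω) (A : Fin K → Ω → Bool) (L : Fin K → Ω → 𝓛) (m : ℕ) : Ω → ℝ :=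
  fun ω => ∏ k ∈ Finset.univ.filter (fun k : Fin K => K - m ≤ (k : ℕ)),
    cP P {ω' | A k ω' = A k ω} (Aseg A (K - m) (k : ℕ) (fun j => A j ω)) /
      cP P {ω' | A k ω' = A k ω}
        (Lpast L (k : ℕ) (fun j => L j ω) ∩ Apast A (k : ℕ) (fun j => A j ω))

/-- Partial stabilized weights `W_psw^(m)`. -/
def Wpsw (P : Measure Ω) (A : Fin K → Ω → Bool) (L : Fin K → Ω → 𝓛) (m : ℕ) : Ω → ℝ :=
  fun ω => ∏ k ∈ Finset.univ.filter (fun k : Fin K => K - m ≤ (k : ℕ)),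
    cP P {ω' | A k ω' = A k ω} (Apast A (k : ℕ) (fun j => A j ω)) /
      cP P {ω' | A k ω' = A k ω}
        (Lpast L (k : ℕ) (fun j => L j ω) ∩ Apast A (k : ℕ) (fun j => A j ω))

/-- IP-weighted contrast `θ_W^(m)`. -/
def θW (P : Measure Ω) (A : Fin K → Ω → Bool) (m : ℕ) (W Y : Ω → ℝ) : ℝ :=
  (∫ ω in Etr A m true, W ω * Y ω ∂P) / (∫ ω in Etr A m true, W ω ∂P) -
    (∫ ω in Etr A m false, W ω * Y ω ∂P) / (∫ ω in Etr A m false, W ω ∂P)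

/-- `rev j` is the time index `K − 1 − j`; the paper's coefficient `ψ_{j+1}`
multiplies `a(K − (j+1)) = a(rev j)`. -/
def rev (j : Fin K) : Fin K := ⟨K - 1 - (j : ℕ), by have := j.isLt; omega⟩

/-- `θ^(K) = 𝔼[Y^{1_K}] − 𝔼[Y^{0_K}]`. -/
def θKfull (P : Measure Ω) (Ypot : (Fin K → Bool) → Ω → ℝ) : ℝ :=
  (∫ ω, Ypot (fun _ => true) ω ∂P) - ∫ ω, Ypot (fun _ => false) ω ∂P

/-- (A1) consistency. -/
def A1ok (A : Fin K → Ω → Bool) (Y : Ω → ℝ) (Ypot : (Fin K → Bool) → Ω → ℝ) : Prop :=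
  ∀ (a : Fin K → Bool) (ω : Ω), (∀ k, A k ω = a k) → Y ω = Ypot a ω

/-- (A2) sequential exchangeability. -/
def A2ok (P : Measure Ω) (A : Fin K → Ω → Bool) (L : Fin K → Ω → 𝓛)
    (Ypot : (Fin K → Bool) → Ω → ℝ) : Prop :=
  ∀ (t : Fin K) (a : Fin K → Bool) (B : Set ℝ), MeasurableSet B →
    ∀ (av : Bool) (l : Fin K → 𝓛) (b : Fin K → Bool),
      0 < P (Lpast L (t : ℕ) l ∩ Apast A (t : ℕ) b) →
      cP P ({ω | Ypot a ω ∈ B} ∩ {ω | A t ω = av}) (Lpast L (t : ℕ) l ∩ Apast A (t : ℕ) b) =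
        cP P {ω | Ypot a ω ∈ B} (Lpast L (t : ℕ) l ∩ Apast A (t : ℕ) b) *
          cP P {ω | A t ω = av} (Lpast L (t : ℕ) l ∩ Apast A (t : ℕ) b)

/-- (A3) positivity. -/
def A3ok (P : Measure Ω) (A : Fin K → Ω → Bool) (L : Fin K → Ω → 𝓛) : Prop :=
  ∀ (t : Fin K) (av : Bool) (l : Fin K → 𝓛) (b : Fin K → Bool),
    0 < P (Lpast L (t : ℕ) l ∩ Apast A (t : ℕ) b) →
    0 < cP P {ω | A t ω = av} (Lpast L (t : ℕ) l ∩ Apast A (t : ℕ) b)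

/-- The marginal structural model `𝔼[Y^{ā}] = ψ₀ + Σ_{j=1}^K ψ_j a(K−j)`;
here `ψ j` is the paper's `ψ_{j+1}`, the coefficient of `a(K−1−j)`. -/
def MSMeq (P : Measure Ω) (Ypot : (Fin K → Bool) → Ω → ℝ) (ψ0 : ℝ) (ψ : Fin K → ℝ) : Prop :=
  ∀ a : Fin K → Bool,
    (∫ ω, Ypot a ω ∂P) = ψ0 + ∑ j : Fin K, ψ j * (if a (rev j) = true then 1 else 0)

/-- (A5) conditional MSM given the past treatment history `Ā(K−m−1)`. -/
def A5ok (P : Measure Ω) (A : Fin K → Ω → Bool) (Ypot : (Fin K → Bool) → Ω → ℝ)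
    (m : ℕ) : Prop :=
  ∀ b : Fin K → Bool, 0 < P (Apast A (K - m) b) →
    ∃ (φ0 : ℝ) (φ : Fin K → ℝ), ∀ a : Fin K → Bool,
      (∫ ω in Apast A (K - m) b, Ypot a ω ∂P) / (P (Apast A (K - m) b)).toReal =
        φ0 + ∑ j : Fin K, φ j * (if a (rev j) = true then 1 else 0)

/-- `q_{j+1} = P(A(K−1−j)=1 | A̲(K−m)=1_m) − P(A(K−1−j)=1 | A̲(K−m)=0_m)`. -/
def qcoef (P : Measure Ω) (A : Fin K → Ω → Bool) (m : ℕ) (j : Fin K) : ℝ :=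
  cP P {ω | A (rev j) ω = true} (Etr A m true) -
    cP P {ω | A (rev j) ω = true} (Etr A m false)

end

/-!
On the event `Ā = b̄` both weights are a numerator depending on `b̄` alone, divided by the product
of the propensities `π_k = P(A(k) = b(k) | L̄(k), Ā(k−1))` over `t₀ ≤ k < K`, with `t₀ = 0` for
`W_sw` and `t₀ = K − m` for `W_rsw`. By the chain rule the numerator is `P(Ā = b̄)`, respectively
`P(A̲(K−m) = a_m)`. Sequential exchangeability and positivity give the g-formula
`𝔼[1{Ā(s−1) = b̄} Y^{b̄} / ∏_{t₀ ≤ k < s} π_k] = 𝔼[1{Ā(t₀−1) = b̄} Y^{b̄}]`, by induction on `s`: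
on each cell of `L̄(s)` the weight is constant and
`𝔼[Y^{b̄} 1{A(s) = b(s)} | cell] = π_s 𝔼[Y^{b̄} | cell]`.

With the MSM this yields `θ_sw^(m) = Σ_j ψ_j q_j`, where `q_j = 1` for `j ≤ m`; with (A5), whose
coefficients average to those of the MSM, it yields `θ_rsw^(m) = Σ_{j ≤ m} ψ_j`; and
`θ^(K) = Σ_j ψ_j`. Each of the three equalities thus says that `Σ_{j > m} ψ_j c_j = 0` with
`c_j` equal to `1 − q_j`, `1` or `q_j`, all positive by (A6). As the `ψ_j` have one sign (A4),
each is equivalent to `ψ_j = 0` for all `j > m`.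
-/

section Partition

variable {Ω β : Type*} [MeasurableSpace Ω] [MeasurableSpace β] [MeasurableSingletonClass β]
  {μ : Measure Ω}

lemma setIntegral_preimage_finset {φ : Ω → β} (hφ : Measurable φ)
    (T : Finset β) {f : Ω → ℝ} (hf : ∀ b ∈ T, IntegrableOn f (φ ⁻¹' {b}) μ) :
    ∫ ω in φ ⁻¹' T, f ω ∂μ = ∑ b ∈ T, ∫ ω in φ ⁻¹' {b}, f ω ∂μ := by
  rw [← Finset.set_biUnion_preimage_singleton]
  exact integral_biUnion_finset T (fun b _ => hφ (measurableSet_singleton b))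
    (fun b _ b' _ hbb' => (Set.disjoint_singleton.mpr hbb').preimage φ) hf

lemma setIntegral_eq_sum_fiber [Fintype β] {φ : Ω → β} (hφ : Measurable φ)
    {S : Set Ω} {f : Ω → ℝ} (hf : IntegrableOn f S μ) :
    ∫ ω in S, f ω ∂μ = ∑ v, ∫ ω in φ ⁻¹' {v} ∩ S, f ω ∂μ := by
  have h := setIntegral_preimage_finset (μ := μ.restrict S) hφ Finset.univ
    (fun v _ => hf.integrable.integrableOn)
  simp only [Finset.coe_univ, Set.preimage_univ, Measure.restrict_univ] at h
  rw [h]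
  exact Finset.sum_congr rfl fun v _ => by
    rw [Measure.restrict_restrict (hφ (measurableSet_singleton v))]

end Partition

section Index

variable {K : ℕ}

def finIco (s t : ℕ) : Finset (Fin K) := univ.filter fun k => s ≤ (k : ℕ) ∧ (k : ℕ) < t

lemma finIco_self (s : ℕ) : (finIco s s : Finset (Fin K)) = ∅ := by
  ext k; simp only [finIco, mem_filter, mem_univ, true_and, Finset.notMem_empty, iff_false]; omega

lemma finIco_zero_left : (finIco 0 K : Finset (Fin K)) = univ := by
  ext k; simp [finIco]

lemma filter_le_eq_finIco (s : ℕ) : univ.filter (fun k : Fin K => s ≤ (k : ℕ)) = finIco s K := by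
  ext k; simp [finIco]

lemma prod_finIco_succ {M : Type*} [CommMonoid M] (f : Fin K → M) {s : ℕ} (t : Fin K)
    (hst : s ≤ t) : ∏ k ∈ finIco s (t + 1), f k = f t * ∏ k ∈ finIco s t, f k := by
  have h : (finIco s (t + 1) : Finset (Fin K)) = insert t (finIco s t) := by
    ext k
    simp only [finIco, mem_filter, mem_univ, true_and, mem_insert, ← Fin.val_inj]
    omega
  rw [h, prod_insert (by simp [finIco])]

def tailFinset (s : ℕ) (a : Bool) : Finset (Fin K → Bool) :=
  univ.filter fun b => ∀ k : Fin K, s ≤ (k : ℕ) → b k = a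

def setTail (s : ℕ) (b : Fin K → Bool) (a : Bool) : Fin K → Bool :=
  fun k => if s ≤ (k : ℕ) then a else b k

lemma setTail_mem_tailFinset (s : ℕ) (b : Fin K → Bool) (a : Bool) :
    setTail s b a ∈ tailFinset s a := by
  simp +contextual [tailFinset, setTail]

lemma setTail_eq_self {s : ℕ} {a : Bool} {b : Fin K → Bool} (hb : b ∈ tailFinset s a) :
    setTail s b a = b := by
  simp only [tailFinset, mem_filter, mem_univ, true_and] at hb
  funext k
  by_cases hk : s ≤ (k : ℕ) <;> simp [setTail, hk, hb]

lemma setTail_setTail (s : ℕ) (b : Fin K → Bool) (a a' : Bool) :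
    setTail s (setTail s b a') a = setTail s b a := by
  funext k; by_cases hk : s ≤ (k : ℕ) <;> simp [setTail, hk]

lemma sum_tailFinset_eq_sum_setTail {M : Type*} [AddCommMonoid M] (f : (Fin K → Bool) → M)
    (s : ℕ) (a a' : Bool) :
    ∑ b ∈ tailFinset s a, f b = ∑ p ∈ tailFinset s a', f (setTail s p a) :=
  sum_nbij' (setTail s · a') (setTail s · a) (fun b _ => setTail_mem_tailFinset s b a')
    (fun p _ => setTail_mem_tailFinset s p a)
    (fun b hb => by simp only [setTail_setTail, setTail_eq_self hb])
    (fun p hp => by simp only [setTail_setTail, setTail_eq_self hp])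
    (fun b hb => by simp only [setTail_setTail, setTail_eq_self hb])

lemma le_rev_iff (m : ℕ) (j : Fin K) : K - m ≤ (rev j : ℕ) ↔ (j : ℕ) < m := by
  have := j.isLt
  simp only [rev]
  omega

lemma rev_injective : Function.Injective (rev : Fin K → Fin K) := by
  intro j j' h
  have := j.isLt
  have := j'.isLt
  have h' := congrArg Fin.val h
  simp only [rev] at h'
  exact Fin.ext (by omega)

end Index

section Histories

variable {Ω 𝓛 : Type*} {K : ℕ}

lemma Apast_congr (A : Fin K → Ω → Bool) {t : ℕ} {b b' : Fin K → Bool}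
    (h : ∀ k : Fin K, (k : ℕ) < t → b k = b' k) : Apast A t b = Apast A t b' := by
  ext ω
  exact forall_congr' fun k => imp_congr_right fun hk => by rw [h k hk]

lemma Lpast_congr (L : Fin K → Ω → 𝓛) {t : ℕ} {l l' : Fin K → 𝓛}
    (h : ∀ k : Fin K, (k : ℕ) ≤ t → l k = l' k) : Lpast L t l = Lpast L t l' := by
  ext ω
  exact forall_congr' fun k => imp_congr_right fun hk => by rw [h k hk]

lemma Apast_zero (A : Fin K → Ω → Bool) (b : Fin K → Bool) : Apast A 0 b = Set.univ := by
  ext ω; simp [Apast]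

lemma Apast_succ (A : Fin K → Ω → Bool) (b : Fin K → Bool) (t : Fin K) :
    Apast A (t + 1) b = Apast A t b ∩ {ω | A t ω = b t} := by
  ext ω
  simp only [Apast, Set.mem_ofPred_eq, Set.mem_inter_iff, Nat.lt_succ_iff_lt_or_eq, or_imp,
    forall_and, Fin.val_inj, forall_eq]

lemma Aseg_zero (A : Fin K → Ω → Bool) (t : ℕ) (b : Fin K → Bool) :
    Aseg A 0 t b = Apast A t b := by
  ext ω; simp [Aseg, Apast]

lemma Aseg_self (A : Fin K → Ω → Bool) (s : ℕ) (b : Fin K → Bool) :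
    Aseg A s s b = Set.univ := by
  ext ω; simp only [Aseg, Set.mem_ofPred_eq, Set.mem_univ, iff_true]; omega

lemma Aseg_succ (A : Fin K → Ω → Bool) (b : Fin K → Bool) {s : ℕ} (t : Fin K) (hst : s ≤ t) :
    Aseg A s (t + 1) b = Aseg A s t b ∩ {ω | A t ω = b t} := by
  ext ω
  simp only [Aseg, Set.mem_ofPred_eq, Set.mem_inter_iff, Nat.lt_succ_iff_lt_or_eq, or_imp,
    forall_and, Fin.val_inj]
  exact and_congr_right fun _ => ⟨fun h => h t hst rfl, fun h k _ hk => hk ▸ h⟩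

lemma Lpast_eq_preimage (L : Fin K → Ω → 𝓛) (t : ℕ) (ω₀ : Ω) :
    Lpast L t (fun j => L j ω₀) =
      (fun ω (k : {k : Fin K // (k : ℕ) ≤ t}) => L k ω) ⁻¹'
        {fun k : {k : Fin K // (k : ℕ) ≤ t} => L k ω₀} := by
  ext ω; simp [Lpast, funext_iff]

lemma Apast_K_eq_preimage (A : Fin K → Ω → Bool) (b : Fin K → Bool) :
    Apast A K b = (fun ω k => A k ω) ⁻¹' {b} := by
  ext ω; simp [Apast, funext_iff]

lemma preimage_tailFinset {A : Fin K → Ω → Bool} (m : ℕ) (a : Bool) :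
    (fun ω k => A k ω) ⁻¹' ↑(tailFinset (K := K) (K - m) a) = Etr A m a := by
  ext; simp [Etr, EtrV, tailFinset]

lemma Aseg_eq_Etr {A : Fin K → Ω → Bool} {m : ℕ} {a : Bool} {b : Fin K → Bool}
    (hb : b ∈ tailFinset (K - m) a) :
    Aseg A (K - m) K b = Etr A m a := by
  simp only [tailFinset, mem_filter, mem_univ, true_and] at hb
  ext ω
  simp +contextual [Aseg, Etr, EtrV, hb]

lemma A1ok.eq_of_mem_Apast {A : Fin K → Ω → Bool} {Y : Ω → ℝ} {Ypot : (Fin K → Bool) → Ω → ℝ}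
    (hA1 : A1ok A Y Ypot)
    (b : Fin K → Bool) : ∀ ω ∈ Apast A K b, Y ω = Ypot b ω :=
  fun ω hω => hA1 b ω fun k => hω k k.isLt

end Histories

section Events

variable {Ω : Type*} [MeasurableSpace Ω] {K : ℕ} {P : Measure Ω} {A : Fin K → Ω → Bool}

lemma measurableSet_Apast (hA : ∀ k, Measurable (A k)) (t : ℕ)
    (b : Fin K → Bool) : MeasurableSet (Apast A t b) := by
  simp only [Apast, Set.ofPred_forall]
  exact .iInter fun k => .iInter fun _ => hA k (measurableSet_singleton (b k))

lemma setIntegral_Etr_eq_sum (hA : ∀ k, Measurable (A k)) (m : ℕ) (a : Bool) {f : Ω → ℝ}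
    (hf : ∀ b ∈ tailFinset (K - m) a, IntegrableOn f (Apast A K b) P) :
    ∫ ω in Etr A m a, f ω ∂P = ∑ b ∈ tailFinset (K - m) a, ∫ ω in Apast A K b, f ω ∂P := by
  simp only [← preimage_tailFinset, Apast_K_eq_preimage] at hf ⊢
  exact setIntegral_preimage_finset (measurable_pi_lambda _ hA) _ hf

lemma integral_eq_sum_Apast (hA : ∀ k, Measurable (A k)) (s : ℕ) (a : Bool) {f : Ω → ℝ}
    (hf : Integrable f P) :
    ∫ ω, f ω ∂P = ∑ b ∈ tailFinset s a, ∫ ω in Apast A s b, f ω ∂P := by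
  let φ : Ω → Fin K → Bool := fun ω => setTail s (fun k => A k ω) a
  have hφ : Measurable φ :=
    (measurable_of_finite fun b => setTail s b a).comp (measurable_pi_lambda _ hA)
  have hfiber : ∀ b ∈ tailFinset s a, φ ⁻¹' {b} = Apast A s b := by
    intro b hb
    simp only [tailFinset, mem_filter, mem_univ, true_and] at hb
    ext ω
    simp only [Set.mem_preimage, Set.mem_singleton_iff, funext_iff, φ, setTail, Apast,
      Set.mem_ofPred_eq]
    refine forall_congr' fun k => ?_
    by_cases hk : s ≤ (k : ℕ) <;> simp [hk, hb k, not_le.mp]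
  have huniv : φ ⁻¹' ↑(tailFinset (K := K) s a) = Set.univ :=
    Set.eq_univ_of_forall fun _ => setTail_mem_tailFinset s _ a
  rw [← setIntegral_univ, ← huniv,
    setIntegral_preimage_finset hφ _ fun b hb => (hfiber b hb).symm ▸ hf.integrableOn]
  exact sum_congr rfl fun b hb => by rw [hfiber b hb]

lemma sum_measure_Apast [IsFiniteMeasure P] (hA : ∀ k, Measurable (A k))
    (T : Finset (Fin K → Bool)) :
    ∑ b ∈ T, (P (Apast A K b)).toReal = (P ((fun ω k => A k ω) ⁻¹' ↑T)).toReal := by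
  simp only [Apast_K_eq_preimage]
  rw [← ENNReal.toReal_sum fun _ _ => measure_ne_top _ _, sum_measure_preimage_singleton T
    fun b _ => measurable_pi_lambda _ hA (measurableSet_singleton b)]

end Events

section ConditionalProbability

variable {Ω : Type*} [MeasurableSpace Ω] {K : ℕ}

lemma cP_nonneg (P : Measure Ω) (E F : Set Ω) : 0 ≤ cP P E F :=
  div_nonneg ENNReal.toReal_nonneg ENNReal.toReal_nonneg

lemma cP_mul_measure (P : Measure Ω) [IsFiniteMeasure P] (F E : Set Ω) :
    cP P F E * (P E).toReal = (P (F ∩ E)).toReal := by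
  rcases eq_or_ne (P E) 0 with h | h
  · simp [cP, h, measure_mono_null Set.inter_subset_right h]
  · rw [cP, div_mul_cancel₀ _ (ENNReal.toReal_ne_zero.mpr ⟨h, measure_ne_top P E⟩)]

lemma prod_cP_Aseg (P : Measure Ω) [IsProbabilityMeasure P] (A : Fin K → Ω → Bool)
    (b : Fin K → Bool) {s t : ℕ} (hst : s ≤ t) (htK : t ≤ K) :
    ∏ k ∈ finIco s t, cP P {ω | A k ω = b k} (Aseg A s k b) = (P (Aseg A s t b)).toReal := by
  induction t, hst using Nat.le_induction with
  | base => simp [finIco_self, Aseg_self]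
  | succ t hst ih =>
    have := prod_finIco_succ (fun k => cP P {ω | A k ω = b k} (Aseg A s k b)) ⟨t, htK⟩ hst
    simp only at this
    rw [this, ih (by omega), cP_mul_measure, Aseg_succ A b ⟨t, htK⟩ hst, Set.inter_comm]

lemma setIntegral_inter_eq_cP_mul (P : Measure Ω) [IsFiniteMeasure P] {f : Ω → ℝ}
    (hf : Measurable f) {F G : Set Ω} (hF : P F ≠ 0)
    (hfac : ∀ B : Set ℝ, MeasurableSet B →
      cP P ({ω | f ω ∈ B} ∩ G) F = cP P {ω | f ω ∈ B} F * cP P G F) :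
    ∫ ω in F ∩ G, f ω ∂P = cP P G F * ∫ ω in F, f ω ∂P := by
  have hF' : (P F).toReal ≠ 0 := ENNReal.toReal_ne_zero.mpr ⟨hF, measure_ne_top P F⟩
  have hmap : (P.restrict (F ∩ G)).map f = ENNReal.ofReal (cP P G F) • (P.restrict F).map f := by
    ext B hB
    have key : cP P (f ⁻¹' B ∩ G) F = cP P (f ⁻¹' B) F * cP P G F := hfac B hB
    rw [cP, cP, div_mul_eq_mul_div, div_left_inj' hF'] at key
    rw [Measure.smul_apply, Measure.map_apply hf hB, Measure.map_apply hf hB,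
      Measure.restrict_apply (hf hB), Measure.restrict_apply (hf hB), smul_eq_mul,
      ← ENNReal.ofReal_toReal (measure_ne_top P (f ⁻¹' B ∩ F)),
      ← ENNReal.ofReal_mul (cP_nonneg P G F), mul_comm (cP P G F), ← key,
      ENNReal.ofReal_toReal (measure_ne_top _ _), Set.inter_comm F G, ← Set.inter_assoc]
  have hint : ∀ S, ∫ x, x ∂(P.restrict S).map f = ∫ ω in S, f ω ∂P :=
    fun S => integral_map hf.aemeasurable aestronglyMeasurable_id
  rw [← hint, hmap, integral_smul_measure, ENNReal.toReal_ofReal (cP_nonneg P G F), hint,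
    smul_eq_mul]

end ConditionalProbability

section GFormula

variable {Ω 𝓛 : Type*} [MeasurableSpace Ω] {K : ℕ}
  {P : Measure Ω} {A : Fin K → Ω → Bool} {L : Fin K → Ω → 𝓛}

noncomputable def propensity (P : Measure Ω) (A : Fin K → Ω → Bool) (L : Fin K → Ω → 𝓛)
    (l : Fin K → 𝓛) (b : Fin K → Bool) (k : Fin K) : ℝ :=
  cP P {ω | A k ω = b k} (Lpast L k l ∩ Apast A k b)

lemma prod_propensity_congr {l l' : Fin K → 𝓛} (b : Fin K → Bool) {s t : ℕ}
    (h : ∀ j : Fin K, (j : ℕ) < t → l j = l' j) :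
    ∏ k ∈ finIco s t, propensity P A L l b k = ∏ k ∈ finIco s t, propensity P A L l' b k := by
  refine prod_congr rfl fun k hk => ?_
  simp only [finIco, mem_filter, mem_univ, true_and] at hk
  rw [propensity, propensity, Lpast_congr L fun j hj => h j (by omega)]

def MeanExchangeable (P : Measure Ω) (A : Fin K → Ω → Bool) (L : Fin K → Ω → 𝓛)
    (b : Fin K → Bool) (g : Ω → ℝ) : Prop :=
  ∀ (t : Fin K) (l : Fin K → 𝓛), 0 < P (Lpast L t l ∩ Apast A t b) →
    ∫ ω in Lpast L t l ∩ Apast A t b ∩ {ω | A t ω = b t}, g ω ∂P =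
      propensity P A L l b t * ∫ ω in Lpast L t l ∩ Apast A t b, g ω ∂P

lemma meanExchangeable_one [IsFiniteMeasure P] (b : Fin K → Bool) :
    MeanExchangeable P A L b fun _ => 1 := by
  intro t l _
  simp only [setIntegral_const, smul_eq_mul, mul_one, measureReal_def, propensity,
    cP_mul_measure, Set.inter_comm]

lemma A2ok.meanExchangeable [IsFiniteMeasure P] {Ypot : (Fin K → Bool) → Ω → ℝ}
    (hA2 : A2ok P A L Ypot) (hYpm : ∀ a, Measurable (Ypot a)) (b : Fin K → Bool) :
    MeanExchangeable P A L b (Ypot b) := fun t l hpos =>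
  setIntegral_inter_eq_cP_mul P (hYpm b) hpos.ne' fun B hB => hA2 t b B hB (b t) l b hpos

lemma setIntegral_inter_inv_propensity_mul [IsFiniteMeasure P] (hA3 : A3ok P A L)
    {b : Fin K → Bool} {g : Ω → ℝ} (hg : MeanExchangeable P A L b g) (t : Fin K)
    (l : Fin K → 𝓛) (c : ℝ) :
    ∫ ω in Lpast L t l ∩ Apast A t b ∩ {ω | A t ω = b t},
        (propensity P A L l b t * c)⁻¹ * g ω ∂P =
      ∫ ω in Lpast L t l ∩ Apast A t b, c⁻¹ * g ω ∂P := by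
  rw [integral_const_mul, integral_const_mul]
  rcases eq_or_ne (P (Lpast L t l ∩ Apast A t b)) 0 with h0 | h0
  · rw [setIntegral_measure_zero _ h0,
      setIntegral_measure_zero _ (measure_mono_null Set.inter_subset_left h0), mul_zero, mul_zero]
  · have hpos := pos_iff_ne_zero.mpr h0
    rw [hg t l hpos, mul_inv, mul_comm _ c⁻¹, mul_assoc,
      inv_mul_cancel_left₀ (show propensity P A L l b t ≠ 0 from (hA3 t (b t) l b hpos).ne')]

variable [MeasurableSpace 𝓛] [Fintype 𝓛] [MeasurableSingletonClass 𝓛]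

lemma integrable_fun_covariates_mul (hL : ∀ k, Measurable (L k)) (F : (Fin K → 𝓛) → ℝ) {g : Ω → ℝ}
    (hg : Integrable g P) : Integrable (fun ω => F (fun k => L k ω) * g ω) P :=
  hg.bdd_mul ((measurable_of_finite F).comp (measurable_pi_lambda _ hL)).aestronglyMeasurable
    (ae_of_all _ fun _ => single_le_sum (fun l _ => abs_nonneg (F l)) (mem_univ _))

lemma setIntegral_Apast_succ_inv_prod_propensity_mul [IsFiniteMeasure P]
    (hA : ∀ k, Measurable (A k)) (hL : ∀ k, Measurable (L k)) (hA3 : A3ok P A L)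
    {b : Fin K → Bool} {g : Ω → ℝ} (hg : MeanExchangeable P A L b g) (hgi : Integrable g P)
    {s : ℕ} (t : Fin K) (hst : s ≤ t) :
    ∫ ω in Apast A (t + 1) b,
        (∏ k ∈ finIco s (t + 1), propensity P A L (fun j => L j ω) b k)⁻¹ * g ω ∂P =
      ∫ ω in Apast A t b,
        (∏ k ∈ finIco s t, propensity P A L (fun j => L j ω) b k)⁻¹ * g ω ∂P := by
  -- partition by the covariate history `L̄(t)`, on whose cells the weights are constant
  let φ : Ω → ({k : Fin K // (k : ℕ) ≤ t} → 𝓛) := fun ω k => L k ω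
  have hφ : Measurable φ := measurable_pi_lambda _ fun k => hL k
  have hint : ∀ u : ℕ, Integrable
      (fun ω => (∏ k ∈ finIco s u, propensity P A L (fun j => L j ω) b k)⁻¹ * g ω) P :=
    fun u => integrable_fun_covariates_mul hL
      (fun l => (∏ k ∈ finIco s u, propensity P A L l b k)⁻¹) hgi
  rw [setIntegral_eq_sum_fiber hφ (hint _).integrableOn,
    setIntegral_eq_sum_fiber hφ (hint _).integrableOn]
  refine sum_congr rfl fun v _ => ?_
  rw [Apast_succ, ← Set.inter_assoc]
  rcases (φ ⁻¹' {v} ∩ Apast A t b).eq_empty_or_nonempty with h | ⟨ω₀, hv, -⟩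
  · simp [h]
  set l : Fin K → 𝓛 := fun j => L j ω₀
  have hcell : φ ⁻¹' {v} = Lpast L t l := by
    rw [← Set.mem_singleton_iff.mp hv]
    exact (Lpast_eq_preimage L t ω₀).symm
  have hC : MeasurableSet (Lpast L t l ∩ Apast A t b) :=
    (hcell ▸ hφ (measurableSet_singleton v)).inter (measurableSet_Apast hA t b)
  set c₀ := ∏ k ∈ finIco s t, propensity P A L l b k
  have hw : ∀ ω ∈ Lpast L t l ∩ Apast A t b ∩ {ω | A t ω = b t},
      (∏ k ∈ finIco s (t + 1), propensity P A L (fun j => L j ω) b k)⁻¹ * g ω =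
        (propensity P A L l b t * c₀)⁻¹ * g ω := fun ω hω => by
    rw [prod_propensity_congr b fun j hj => hω.1.1 j (by omega), prod_finIco_succ _ t hst]
  have hw' : ∀ ω ∈ Lpast L t l ∩ Apast A t b,
      (∏ k ∈ finIco s t, propensity P A L (fun j => L j ω) b k)⁻¹ * g ω = c₀⁻¹ * g ω :=
    fun ω hω => by rw [prod_propensity_congr b fun j hj => hω.1 j (by omega)]
  have hCG : MeasurableSet (Lpast L t l ∩ Apast A t b ∩ {ω | A t ω = b t}) :=
    hC.inter (hA t (measurableSet_singleton _))
  rw [hcell, setIntegral_congr_fun hCG hw, setIntegral_congr_fun hC hw']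
  exact setIntegral_inter_inv_propensity_mul hA3 hg t l c₀

theorem setIntegral_Apast_inv_prod_propensity_mul [IsFiniteMeasure P]
    (hA : ∀ k, Measurable (A k)) (hL : ∀ k, Measurable (L k)) (hA3 : A3ok P A L)
    {b : Fin K → Bool} {g : Ω → ℝ} (hg : MeanExchangeable P A L b g) (hgi : Integrable g P)
    {s t : ℕ} (hst : s ≤ t) (htK : t ≤ K) :
    ∫ ω in Apast A t b, (∏ k ∈ finIco s t, propensity P A L (fun j => L j ω) b k)⁻¹ * g ω ∂P =
      ∫ ω in Apast A s b, g ω ∂P := by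
  induction t, hst using Nat.le_induction with
  | base => simp [finIco_self]
  | succ t hst ih =>
    exact (setIntegral_Apast_succ_inv_prod_propensity_mul hA hL hA3 hg hgi ⟨t, htK⟩ hst).trans
      (ih (by omega))

end GFormula

section Weights

variable {Ω 𝓛 : Type*} [MeasurableSpace Ω] {K : ℕ} {P : Measure Ω} [IsProbabilityMeasure P]
  {A : Fin K → Ω → Bool} {L : Fin K → Ω → 𝓛}

lemma Wsw_eq_of_mem_Apast {b : Fin K → Bool} {ω : Ω} (hω : ω ∈ Apast A K b) :
    Wsw P A L ω =
      (P (Apast A K b)).toReal * (∏ k ∈ finIco 0 K, propensity P A L (fun j => L j ω) b k)⁻¹ := by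
  have hAb : ∀ k, A k ω = b k := fun k => hω k k.isLt
  simp only [Wsw, hAb]
  rw [prod_div_distrib, div_eq_mul_inv, ← Aseg_zero A K b,
    ← prod_cP_Aseg P A b K.zero_le le_rfl, finIco_zero_left]
  simp only [Aseg_zero]
  rfl

lemma Wrsw_eq_of_mem_Apast (m : ℕ) {b : Fin K → Bool} {ω : Ω} (hω : ω ∈ Apast A K b) :
    Wrsw P A L m ω = (P (Aseg A (K - m) K b)).toReal *
      (∏ k ∈ finIco (K - m) K, propensity P A L (fun j => L j ω) b k)⁻¹ := by
  have hAb : ∀ k, A k ω = b k := fun k => hω k k.isLt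
  simp only [Wrsw, hAb]
  rw [prod_div_distrib, div_eq_mul_inv, ← prod_cP_Aseg P A b (Nat.sub_le K m) le_rfl,
    filter_le_eq_finIco]
  rfl

variable [MeasurableSpace 𝓛] [Fintype 𝓛] [MeasurableSingletonClass 𝓛]

lemma setIntegral_Apast_weight_mul (hA : ∀ k, Measurable (A k)) (hL : ∀ k, Measurable (L k))
    (hA3 : A3ok P A L) {b : Fin K → Bool} {W g gb : Ω → ℝ} (c : ℝ) {s : ℕ} (hs : s ≤ K)
    (hW : ∀ ω ∈ Apast A K b,
      W ω = c * (∏ k ∈ finIco s K, propensity P A L (fun j => L j ω) b k)⁻¹)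
    (hg : ∀ ω ∈ Apast A K b, g ω = gb ω) (hgb : MeanExchangeable P A L b gb)
    (hgbi : Integrable gb P) :
    IntegrableOn (fun ω => W ω * g ω) (Apast A K b) P ∧
      ∫ ω in Apast A K b, W ω * g ω ∂P = c * ∫ ω in Apast A s b, gb ω ∂P := by
  have heq : Set.EqOn (fun ω => W ω * g ω)
      (fun ω => c * ((∏ k ∈ finIco s K, propensity P A L (fun j => L j ω) b k)⁻¹ * gb ω))
      (Apast A K b) := fun ω hω => by
    simp only [hW ω hω, hg ω hω, mul_assoc]
  have hm := measurableSet_Apast hA K b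
  have hint := (integrable_fun_covariates_mul hL
    (fun l => (∏ k ∈ finIco s K, propensity P A L l b k)⁻¹) hgbi).const_mul c
  refine ⟨hint.integrableOn.congr_fun heq.symm hm, ?_⟩
  rw [setIntegral_congr_fun hm heq, integral_const_mul,
    setIntegral_Apast_inv_prod_propensity_mul hA hL hA3 hgb hgbi hs le_rfl]

theorem setIntegral_Etr_Wsw_mul (hA : ∀ k, Measurable (A k)) (hL : ∀ k, Measurable (L k))
    (hA3 : A3ok P A L) {g : Ω → ℝ} {gpot : (Fin K → Bool) → Ω → ℝ}
    (hcons : ∀ b, ∀ ω ∈ Apast A K b, g ω = gpot b ω)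
    (hex : ∀ b, MeanExchangeable P A L b (gpot b)) (hint : ∀ b, Integrable (gpot b) P)
    (m : ℕ) (a : Bool) :
    ∫ ω in Etr A m a, Wsw P A L ω * g ω ∂P =
      ∑ b ∈ tailFinset (K - m) a, (P (Apast A K b)).toReal * ∫ ω, gpot b ω ∂P := by
  have key := fun b => setIntegral_Apast_weight_mul hA hL hA3 _ K.zero_le
    (fun ω hω => Wsw_eq_of_mem_Apast hω) (hcons b) (hex b) (hint b)
  rw [setIntegral_Etr_eq_sum hA m a fun b _ => (key b).1]
  exact sum_congr rfl fun b _ => by rw [(key b).2, Apast_zero, setIntegral_univ]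

theorem setIntegral_Etr_Wrsw_mul (hA : ∀ k, Measurable (A k)) (hL : ∀ k, Measurable (L k))
    (hA3 : A3ok P A L) {g : Ω → ℝ} {gpot : (Fin K → Bool) → Ω → ℝ}
    (hcons : ∀ b, ∀ ω ∈ Apast A K b, g ω = gpot b ω)
    (hex : ∀ b, MeanExchangeable P A L b (gpot b)) (hint : ∀ b, Integrable (gpot b) P)
    (m : ℕ) (a : Bool) :
    ∫ ω in Etr A m a, Wrsw P A L m ω * g ω ∂P = (P (Etr A m a)).toReal *
      ∑ b ∈ tailFinset (K - m) a, ∫ ω in Apast A (K - m) b, gpot b ω ∂P := by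
  have key := fun b => setIntegral_Apast_weight_mul hA hL hA3 _ (Nat.sub_le K m)
    (fun ω hω => Wrsw_eq_of_mem_Apast m hω) (hcons b) (hex b) (hint b)
  rw [setIntegral_Etr_eq_sum hA m a fun b _ => (key b).1, mul_sum]
  exact sum_congr rfl fun b hb => by rw [(key b).2, Aseg_eq_Etr hb]

end Weights

section MSM

variable {K : ℕ}

def msm (c₀ : ℝ) (c : Fin K → ℝ) (a : Fin K → Bool) : ℝ :=
  c₀ + ∑ j, c j * (if a (rev j) = true then 1 else 0)

lemma msm_coeff_eq {c₀ d₀ : ℝ} {c d : Fin K → ℝ} (h : ∀ a, msm c₀ c a = msm d₀ d a) : c = d := by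
  have h₀ := h fun _ => false
  funext j
  have hj := h fun k => decide (k = rev j)
  simp only [msm, decide_eq_true_eq, rev_injective.eq_iff, mul_ite, mul_one, mul_zero,
    sum_ite_eq', mem_univ, if_true] at hj
  simp only [msm, Bool.false_eq_true, if_false, mul_zero, sum_const_zero, add_zero] at h₀
  linarith

lemma sum_mul_msm {ι : Type*} (s : Finset ι) (w c₀ : ι → ℝ) (c : ι → Fin K → ℝ)
    (a : Fin K → Bool) :
    ∑ p ∈ s, w p * msm (c₀ p) (c p) a =
      msm (∑ p ∈ s, w p * c₀ p) (fun j => ∑ p ∈ s, w p * c p j) a := by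
  simp only [msm, mul_add, sum_add_distrib, mul_sum, sum_mul]
  rw [sum_comm]
  simp only [mul_assoc]

lemma msm_true_sub_msm_false (c₀ : ℝ) (c : Fin K → ℝ) :
    msm c₀ c (fun _ => true) - msm c₀ c (fun _ => false) = ∑ j, c j := by
  simp [msm]

lemma msm_setTail_sub (m : ℕ) (c₀ : ℝ) (c : Fin K → ℝ) (p : Fin K → Bool) :
    msm c₀ c (setTail (K - m) p true) - msm c₀ c (setTail (K - m) p false) =
      ∑ j ∈ univ.filter (fun j : Fin K => (j : ℕ) < m), c j := by
  rw [msm, msm, add_sub_add_left_eq_sub, ← sum_sub_distrib, sum_filter]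
  refine sum_congr rfl fun j _ => ?_
  by_cases hj : (j : ℕ) < m
  · simp [setTail, (le_rev_iff m j).mpr hj, hj]
  · simp [setTail, mt (le_rev_iff m j).mp hj, hj]

variable {Ω : Type*} [MeasurableSpace Ω] {P : Measure Ω} {A : Fin K → Ω → Bool}

lemma θKfull_eq_sum {Ypot : (Fin K → Bool) → Ω → ℝ} {ψ0 : ℝ} {ψ : Fin K → ℝ}
    (hMSM : MSMeq P Ypot ψ0 ψ) : θKfull P Ypot = ∑ j, ψ j :=
  (congrArg₂ (· - ·) (hMSM _) (hMSM _)).trans (msm_true_sub_msm_false ψ0 ψ)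

variable [IsProbabilityMeasure P]

lemma A5ok.exists_coeff {Ypot : (Fin K → Bool) → Ω → ℝ} {m : ℕ} (hA5 : A5ok P A Ypot m) :
    ∃ (Φ₀ : (Fin K → Bool) → ℝ) (Φ : (Fin K → Bool) → Fin K → ℝ), ∀ b a,
      ∫ ω in Apast A (K - m) b, Ypot a ω ∂P =
        (P (Apast A (K - m) b)).toReal * msm (Φ₀ b) (Φ b) a := by
  have h : ∀ b, ∃ (φ₀ : ℝ) (φ : Fin K → ℝ), ∀ a,
      ∫ ω in Apast A (K - m) b, Ypot a ω ∂P = (P (Apast A (K - m) b)).toReal * msm φ₀ φ a := by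
    intro b
    rcases eq_or_ne (P (Apast A (K - m) b)) 0 with h0 | h0
    · exact ⟨0, 0, fun a => by simp [setIntegral_measure_zero _ h0, h0]⟩
    · obtain ⟨φ₀, φ, hφ⟩ := hA5 b (pos_iff_ne_zero.mpr h0)
      refine ⟨φ₀, φ, fun a => ?_⟩
      rw [msm, ← hφ a, mul_div_cancel₀ _ (ENNReal.toReal_ne_zero.mpr ⟨h0, measure_ne_top _ _⟩)]
  choose Φ₀ Φ hΦ using h
  exact ⟨Φ₀, Φ, hΦ⟩

lemma sum_measure_Apast_mul_msm (hA : ∀ k, Measurable (A k)) (m : ℕ) (a : Bool) (c₀ : ℝ)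
    (c : Fin K → ℝ) :
    ∑ b ∈ tailFinset (K - m) a, (P (Apast A K b)).toReal * msm c₀ c b =
      c₀ * (P (Etr A m a)).toReal +
        ∑ j, c j * (P ({ω | A (rev j) ω = true} ∩ Etr A m a)).toReal := by
  have hj : ∀ j : Fin K, (fun ω k => A k ω) ⁻¹'
      ↑((tailFinset (K - m) a).filter fun b => b (rev j) = true) =
        {ω | A (rev j) ω = true} ∩ Etr A m a := by
    intro j
    ext ω
    simp [Etr, EtrV, tailFinset, and_comm]
  have h₁ : ∑ b ∈ tailFinset (K - m) a, (P (Apast A K b)).toReal = (P (Etr A m a)).toReal := by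
    rw [sum_measure_Apast hA, preimage_tailFinset]
  have h₂ : ∀ j : Fin K, ∑ b ∈ tailFinset (K - m) a,
      (P (Apast A K b)).toReal * (if b (rev j) = true then 1 else 0) =
        (P ({ω | A (rev j) ω = true} ∩ Etr A m a)).toReal := by
    intro j
    rw [← hj, ← sum_measure_Apast hA, sum_filter]
    simp only [mul_ite, mul_one, mul_zero]
  simp only [msm, mul_add, mul_sum, sum_add_distrib]
  rw [sum_comm, ← h₁, mul_sum]
  congr 1
  · exact sum_congr rfl fun b _ => mul_comm _ _
  · refine sum_congr rfl fun j _ => ?_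
    rw [← h₂ j, mul_sum]
    exact sum_congr rfl fun b _ => by ring

end MSM

section Contrasts

variable {Ω 𝓛 : Type*} [MeasurableSpace Ω] [MeasurableSpace 𝓛] [Fintype 𝓛]
  [MeasurableSingletonClass 𝓛] {K : ℕ} {P : Measure Ω} [IsProbabilityMeasure P]
  {A : Fin K → Ω → Bool} {L : Fin K → Ω → 𝓛}

theorem θW_Wsw_eq_sum_mul_qcoef (hA : ∀ k, Measurable (A k)) (hL : ∀ k, Measurable (L k)) {m : ℕ}
    {Y : Ω → ℝ} {Ypot : (Fin K → Bool) → Ω → ℝ} (hYpm : ∀ a, Measurable (Ypot a))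
    (hYpi : ∀ a, Integrable (Ypot a) P)
    (hpos1 : 0 < P (Etr A m true)) (hpos0 : 0 < P (Etr A m false))
    (hA1 : A1ok A Y Ypot) (hA2 : A2ok P A L Ypot) (hA3 : A3ok P A L)
    {ψ0 : ℝ} {ψ : Fin K → ℝ} (hMSM : MSMeq P Ypot ψ0 ψ) :
    θW P A m (Wsw P A L) Y = ∑ j, ψ j * qcoef P A m j := by
  have hratio : ∀ a, 0 < P (Etr A m a) →
      (∫ ω in Etr A m a, Wsw P A L ω * Y ω ∂P) / (∫ ω in Etr A m a, Wsw P A L ω ∂P) =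
        ψ0 + ∑ j, ψ j * cP P {ω | A (rev j) ω = true} (Etr A m a) := by
    intro a ha
    have hE : (P (Etr A m a)).toReal ≠ 0 := ENNReal.toReal_ne_zero.mpr ⟨ha.ne', measure_ne_top _ _⟩
    have hden := setIntegral_Etr_Wsw_mul hA hL hA3 (g := fun _ => 1) (gpot := fun _ _ => 1)
      (fun _ _ _ => rfl) (fun b => meanExchangeable_one b) (fun _ => integrable_const 1) m a
    simp only [mul_one, integral_const, probReal_univ, smul_eq_mul] at hden
    rw [setIntegral_Etr_Wsw_mul hA hL hA3 (hA1.eq_of_mem_Apast) (hA2.meanExchangeable hYpm)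
      hYpi m a, hden, sum_measure_Apast hA, preimage_tailFinset]
    simp only [show ∀ b, ∫ ω, Ypot b ω ∂P = msm ψ0 ψ b from hMSM]
    rw [sum_measure_Apast_mul_msm hA, add_div, mul_div_cancel_right₀ _ hE, sum_div]
    simp only [mul_div_assoc, cP]
  rw [θW, hratio true hpos1, hratio false hpos0]
  simp only [qcoef, mul_sub, sum_sub_distrib]
  ring

theorem sum_setIntegral_Apast_true_sub_false (hA : ∀ k, Measurable (A k)) {m : ℕ}
    {Ypot : (Fin K → Bool) → Ω → ℝ} (hYpi : ∀ a, Integrable (Ypot a) P)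
    {ψ0 : ℝ} {ψ : Fin K → ℝ} (hMSM : MSMeq P Ypot ψ0 ψ) (hA5 : A5ok P A Ypot m) :
    ∑ b ∈ tailFinset (K - m) true, ∫ ω in Apast A (K - m) b, Ypot b ω ∂P -
        ∑ b ∈ tailFinset (K - m) false, ∫ ω in Apast A (K - m) b, Ypot b ω ∂P =
      ∑ j ∈ univ.filter (fun j : Fin K => (j : ℕ) < m), ψ j := by
  obtain ⟨Φ₀, Φ, hΦ⟩ := hA5.exists_coeff
  set T := tailFinset (K := K) (K - m) false
  set w : (Fin K → Bool) → ℝ := fun p => (P (Apast A (K - m) p)).toReal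
  -- the marginal model is the `w`-average of the conditional ones
  have hψ : ψ = fun j => ∑ p ∈ T, w p * Φ p j :=
    msm_coeff_eq (c₀ := ψ0) (d₀ := ∑ p ∈ T, w p * Φ₀ p) fun a => by
      rw [← sum_mul_msm, ← show ∫ ω, Ypot a ω ∂P = msm ψ0 ψ a from hMSM a,
        integral_eq_sum_Apast hA (K - m) false (hYpi a)]
      exact sum_congr rfl fun p _ => hΦ p a
  have hApast : ∀ p a, Apast A (K - m) (setTail (K - m) p a) = Apast A (K - m) p :=
    fun p a => Apast_congr A fun k hk => by simp [setTail, not_le.mpr hk]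
  have hterm : ∀ p ∈ T, ∫ ω in Apast A (K - m) (setTail (K - m) p true),
      Ypot (setTail (K - m) p true) ω ∂P - ∫ ω in Apast A (K - m) p, Ypot p ω ∂P =
        w p * ∑ j ∈ univ.filter (fun j : Fin K => (j : ℕ) < m), Φ p j := fun p hp => by
    rw [hApast, hΦ, hΦ, ← mul_sub, ← msm_setTail_sub, setTail_eq_self hp]
  rw [sum_tailFinset_eq_sum_setTail _ (K - m) true false, ← sum_sub_distrib, sum_congr rfl hterm]
  simp only [mul_sum]
  rw [sum_comm, hψ]

theorem θW_Wrsw_eq_sum_lt (hA : ∀ k, Measurable (A k)) (hL : ∀ k, Measurable (L k)) {m : ℕ}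
    {Y : Ω → ℝ} {Ypot : (Fin K → Bool) → Ω → ℝ} (hYpm : ∀ a, Measurable (Ypot a))
    (hYpi : ∀ a, Integrable (Ypot a) P)
    (hpos1 : 0 < P (Etr A m true)) (hpos0 : 0 < P (Etr A m false))
    (hA1 : A1ok A Y Ypot) (hA2 : A2ok P A L Ypot) (hA3 : A3ok P A L)
    {ψ0 : ℝ} {ψ : Fin K → ℝ} (hMSM : MSMeq P Ypot ψ0 ψ) (hA5 : A5ok P A Ypot m) :
    θW P A m (Wrsw P A L m) Y = ∑ j ∈ univ.filter (fun j : Fin K => (j : ℕ) < m), ψ j := by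
  have hratio : ∀ a, 0 < P (Etr A m a) →
      (∫ ω in Etr A m a, Wrsw P A L m ω * Y ω ∂P) / (∫ ω in Etr A m a, Wrsw P A L m ω ∂P) =
        ∑ b ∈ tailFinset (K - m) a, ∫ ω in Apast A (K - m) b, Ypot b ω ∂P := by
    intro a ha
    have hE : (P (Etr A m a)).toReal ≠ 0 := ENNReal.toReal_ne_zero.mpr ⟨ha.ne', measure_ne_top _ _⟩
    have hden := setIntegral_Etr_Wrsw_mul hA hL hA3 (g := fun _ => 1) (gpot := fun _ _ => 1)
      (fun _ _ _ => rfl) (fun b => meanExchangeable_one b) (fun _ => integrable_const 1) m a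
    simp only [mul_one] at hden
    rw [setIntegral_Etr_Wrsw_mul hA hL hA3 (hA1.eq_of_mem_Apast) (hA2.meanExchangeable hYpm)
      hYpi m a, hden, ← integral_eq_sum_Apast hA (K - m) a (integrable_const 1)]
    simp [hE]
  rw [θW, hratio true hpos1, hratio false hpos0]
  exact sum_setIntegral_Apast_true_sub_false hA hYpi hMSM hA5

lemma qcoef_eq_one {m : ℕ} (hpos1 : 0 < P (Etr A m true)) {j : Fin K} (hj : (j : ℕ) < m) :
    qcoef P A m j = 1 := by
  have hrev := (le_rev_iff m j).mpr hj
  have h₁ : {ω | A (rev j) ω = true} ∩ Etr A m true = Etr A m true :=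
    Set.inter_eq_right.mpr fun ω hω => hω (rev j) hrev
  have h₀ : {ω | A (rev j) ω = true} ∩ Etr A m false = ∅ :=
    Set.eq_empty_of_forall_notMem fun ω hω => by simpa [hω.2 (rev j) hrev] using hω.1
  rw [qcoef, cP, cP, h₁, h₀, div_self (ENNReal.toReal_ne_zero.mpr ⟨hpos1.ne', measure_ne_top _ _⟩),
    measure_empty, ENNReal.toReal_zero, zero_div, sub_zero]

end Contrasts

section Sign

variable {K : ℕ}

lemma sum_mul_eq_zero_iff_of_sign {ι : Type*} {s : Finset ι} {x c : ι → ℝ}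
    (hc : ∀ j ∈ s, 0 < c j) (hx : (∀ j, 0 ≤ x j) ∨ (∀ j, x j ≤ 0)) :
    ∑ j ∈ s, x j * c j = 0 ↔ ∀ j ∈ s, x j = 0 := by
  have key : ∀ {y : ι → ℝ}, (∀ j, 0 ≤ y j) → (∑ j ∈ s, y j * c j = 0 ↔ ∀ j ∈ s, y j = 0) :=
    fun hy => by
      rw [sum_eq_zero_iff_of_nonneg fun j hj => mul_nonneg (hy j) (hc j hj).le]
      exact forall₂_congr fun j hj => mul_eq_zero_iff_right (hc j hj).ne'
  rcases hx with hx | hx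
  · exact key hx
  · have := key (y := fun j => -x j) fun j => neg_nonneg.mpr (hx j)
    simpa [neg_mul, sum_neg_distrib] using this

lemma sum_contrast_iff {m : ℕ} {ψ q : Fin K → ℝ} (hψ : (∀ j, 0 ≤ ψ j) ∨ (∀ j, ψ j ≤ 0))
    (hq₁ : ∀ j : Fin K, (j : ℕ) < m → q j = 1)
    (hq : ∀ j : Fin K, m ≤ (j : ℕ) → 0 < q j ∧ q j < 1) :
    (∑ j, ψ j * q j = ∑ j, ψ j ↔
        ∑ j ∈ univ.filter (fun j : Fin K => (j : ℕ) < m), ψ j = ∑ j, ψ j) ∧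
      (∑ j ∈ univ.filter (fun j : Fin K => (j : ℕ) < m), ψ j = ∑ j, ψ j ↔
        ∑ j, ψ j * q j = ∑ j ∈ univ.filter (fun j : Fin K => (j : ℕ) < m), ψ j) := by
  set S := univ.filter fun j : Fin K => ¬ (j : ℕ) < m
  have hS : ∀ j ∈ S, m ≤ (j : ℕ) := fun j hj => not_lt.mp (mem_filter.mp hj).2
  have hlow : ∑ j ∈ univ.filter (fun j : Fin K => (j : ℕ) < m), ψ j * q j =
      ∑ j ∈ univ.filter (fun j : Fin K => (j : ℕ) < m), ψ j :=
    sum_congr rfl fun j hj => by rw [hq₁ j (mem_filter.mp hj).2, mul_one]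
  rw [← sum_filter_add_sum_filter_not univ (fun j : Fin K => (j : ℕ) < m) (fun j => ψ j * q j),
    ← sum_filter_add_sum_filter_not univ (fun j : Fin K => (j : ℕ) < m) ψ, hlow]
  have h₁ := sum_mul_eq_zero_iff_of_sign (s := S) (x := ψ) (c := fun j => 1 - q j)
    (fun j hj => sub_pos.mpr (hq j (hS j hj)).2) hψ
  have h₂ := sum_mul_eq_zero_iff_of_sign (s := S) (x := ψ) (c := fun _ => 1)
    (fun _ _ => one_pos) hψ
  have h₃ := sum_mul_eq_zero_iff_of_sign (s := S) (x := ψ) (c := q)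
    (fun j hj => (hq j (hS j hj)).1) hψ
  simp only [mul_sub, mul_one, sum_sub_distrib] at h₁ h₂
  set r := ∑ j ∈ univ.filter (fun j : Fin K => (j : ℕ) < m), ψ j
  have e₁ : r + ∑ j ∈ S, ψ j * q j = r + ∑ j ∈ S, ψ j ↔ ∀ j ∈ S, ψ j = 0 := by
    rw [← h₁]; constructor <;> intro h <;> linarith
  have e₂ : r = r + ∑ j ∈ S, ψ j ↔ ∀ j ∈ S, ψ j = 0 := by
    rw [← h₂]; constructor <;> intro h <;> linarith
  have e₃ : r + ∑ j ∈ S, ψ j * q j = r ↔ ∀ j ∈ S, ψ j = 0 := by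
    rw [← h₃]; constructor <;> intro h <;> linarith
  exact ⟨e₁.trans e₂.symm, e₂.trans e₃.symm⟩

end Sign

theorem theorem1_general
    {Ω : Type*} [MeasurableSpace Ω] {𝓛 : Type*} [MeasurableSpace 𝓛]
    [Fintype 𝓛] [MeasurableSingletonClass 𝓛]
    (P : Measure Ω) [IsProbabilityMeasure P]
    {K m : ℕ}
    (A : Fin K → Ω → Bool) (L : Fin K → Ω → 𝓛)
    (hA : ∀ k, Measurable (A k)) (hL : ∀ k, Measurable (L k))
    (Y : Ω → ℝ)
    (Ypot : (Fin K → Bool) → Ω → ℝ)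
    (hYpm : ∀ a, Measurable (Ypot a)) (hYpi : ∀ a, Integrable (Ypot a) P)
    (hpos1 : 0 < P (Etr A m true)) (hpos0 : 0 < P (Etr A m false))
    (hA1 : A1ok A Y Ypot) (hA2 : A2ok P A L Ypot) (hA3 : A3ok P A L)
    (ψ0 : ℝ) (ψ : Fin K → ℝ) (hMSM : MSMeq P Ypot ψ0 ψ)
    (hA4 : (∀ j, 0 ≤ ψ j) ∨ (∀ j, ψ j ≤ 0))
    (hA5 : A5ok P A Ypot m)
    (hA6 : ∀ j : Fin K, m ≤ (j : ℕ) → 0 < qcoef P A m j ∧ qcoef P A m j < 1) :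
    (θW P A m (Wsw P A L) Y = θKfull P Ypot ↔
        θW P A m (Wrsw P A L m) Y = θKfull P Ypot) ∧
      (θW P A m (Wrsw P A L m) Y = θKfull P Ypot ↔
        θW P A m (Wsw P A L) Y = θW P A m (Wrsw P A L m) Y) := by
  rw [θW_Wsw_eq_sum_mul_qcoef hA hL hYpm hYpi hpos1 hpos0 hA1 hA2 hA3 hMSM,
    θW_Wrsw_eq_sum_lt hA hL hYpm hYpi hpos1 hpos0 hA1 hA2 hA3 hMSM hA5, θKfull_eq_sum hMSM]
  exact sum_contrast_iff hA4 (fun j hj => qcoef_eq_one hpos1 hj) hA6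

/-- Theorem 1 of the paper. -/
theorem theorem1
    {Ω : Type*} [MeasurableSpace Ω] {𝓛 : Type*} [MeasurableSpace 𝓛]
    [Fintype 𝓛] [Nonempty 𝓛] [MeasurableSingletonClass 𝓛]
    (P : Measure Ω) [IsProbabilityMeasure P]
    {K m : ℕ} (hK : 1 ≤ K) (hm1 : 1 ≤ m) (hmK : m ≤ K)
    (A : Fin K → Ω → Bool) (L : Fin K → Ω → 𝓛)
    (hA : ∀ k, Measurable (A k)) (hL : ∀ k, Measurable (L k))
    (Y : Ω → ℝ) (hY : Measurable Y)
    (Ypot : (Fin K → Bool) → Ω → ℝ)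
    (hYpm : ∀ a, Measurable (Ypot a)) (hYpi : ∀ a, Integrable (Ypot a) P)
    (hpos1 : 0 < P (Etr A m true)) (hpos0 : 0 < P (Etr A m false))
    (hA1 : A1ok A Y Ypot) (hA2 : A2ok P A L Ypot) (hA3 : A3ok P A L)
    (ψ0 : ℝ) (ψ : Fin K → ℝ) (hMSM : MSMeq P Ypot ψ0 ψ)
    (hA4 : (∀ j, 0 ≤ ψ j) ∨ (∀ j, ψ j ≤ 0))
    (hA5 : A5ok P A Ypot m)
    (hA6 : ∀ j : Fin K, m ≤ (j : ℕ) → 0 < qcoef P A m j ∧ qcoef P A m j < 1) :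
    (θW P A m (Wsw P A L) Y = θKfull P Ypot ↔
        θW P A m (Wrsw P A L m) Y = θKfull P Ypot) ∧
      (θW P A m (Wrsw P A L m) Y = θKfull P Ypot ↔
        θW P A m (Wsw P A L) Y = θW P A m (Wrsw P A L m) Y) :=
  theorem1_general P A L hA hL Y Ypot hYpm hYpi hpos1 hpos0 hA1 hA2 hA3 ψ0 ψ hMSM hA4 hA5 hA6

end MSMPaper
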